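/- For every λ > 1 and every integer n ≥ 1, the odd moments vanish, m_{2n−1}(λ) = 0, and the even moments satisfy the recursion m_{2n}(λ) = (λ^{2n} − 1)^{−1} · Σ_{j=0}^{n−1} C(2n, 2j) · m_{2j}(λ), with m_0(λ) = 1. -/

import Mathlib

open MeasureTheory ProbabilityTheory Finset

/-! With `a = λ⁻¹` and `T = ∑ aⁿ⁺¹ Xₙ`, one has `T = a (T' + X₀)` where `T' = ∑ aⁿ⁺¹ Xₙ₊₁` is
independent of `X₀` and, the tail of an i.i.d. sequence being again i.i.d., has the law of `T`.
Expanding `(T' + X₀)ᵏ` binomially with `E[X₀ʲ] = 1` for even `j` and `0` for odd `j` gives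
`λᵏ mₖ = ∑_{j ≤ k, k - j even} C(k,j) mⱼ`. Moving the term `j = k` to the left yields the vanishing
of the odd moments by strong induction, and the even recursion directly. -/

noncomputable def geomWeightedSum (a : ℝ) (y : ℕ → ℝ) : ℝ := ∑' n, a ^ (n + 1) * y n

section GeomWeightedSum

variable {a C : ℝ} {y : ℕ → ℝ}

lemma measurable_geomWeightedSum (a : ℝ) : Measurable (geomWeightedSum a) :=
  Measurable.tsum fun n => (measurable_pi_apply n).const_mul _

lemma norm_pow_succ_mul_le (ha : |a| < 1) (hy : ∀ n, |y n| ≤ C) (n : ℕ) :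
    ‖a ^ (n + 1) * y n‖ ≤ C * |a| ^ n := by
  rw [Real.norm_eq_abs, abs_mul, abs_pow, mul_comm C]
  exact mul_le_mul (pow_le_pow_of_le_one (abs_nonneg a) ha.le n.le_succ) (hy n) (abs_nonneg _)
    (by positivity)

lemma summable_pow_succ_mul (ha : |a| < 1) (hy : ∀ n, |y n| ≤ C) :
    Summable fun n => a ^ (n + 1) * y n :=
  .of_norm_bounded ((summable_geometric_of_lt_one (abs_nonneg a) ha).mul_left C)
    (norm_pow_succ_mul_le ha hy)

lemma abs_geomWeightedSum_le (ha : |a| < 1) (hy : ∀ n, |y n| ≤ C) :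
    |geomWeightedSum a y| ≤ C * (1 - |a|)⁻¹ :=
  tsum_of_norm_bounded ((hasSum_geometric_of_lt_one (abs_nonneg a) ha).mul_left C)
    (norm_pow_succ_mul_le ha hy)

lemma geomWeightedSum_eq_mul_add (ha : |a| < 1) (hy : ∀ n, |y n| ≤ C) :
    geomWeightedSum a y = a * (geomWeightedSum a (fun n => y (n + 1)) + y 0) := by
  rw [geomWeightedSum, (summable_pow_succ_mul ha hy).tsum_eq_zero_add, geomWeightedSum,
    mul_add, ← tsum_mul_left, add_comm]
  congr 1
  · exact tsum_congr fun n => by ring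
  · ring

end GeomWeightedSum

lemma integrable_pow_of_ae_abs_le {Ω : Type*} [MeasurableSpace Ω] {P : Measure Ω}
    [IsFiniteMeasure P] {f : Ω → ℝ} {C : ℝ}
    (hf : AEStronglyMeasurable f P) (hb : ∀ᵐ ω ∂P, |f ω| ≤ C) (j : ℕ) :
    Integrable (fun ω => f ω ^ j) P :=
  .of_bound (hf.pow j) (C ^ j) <| hb.mono fun ω h => by
    rw [norm_pow, Real.norm_eq_abs]
    exact pow_le_pow_left₀ (abs_nonneg _) h j

namespace ProbabilityTheory

variable {Ω : Type*} [MeasurableSpace Ω] {P : Measure Ω}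

lemma iIndepFun.indepFun_head_tail {β : Type*} [MeasurableSpace β] {Y : ℕ → Ω → β}
    (hY : ∀ n, Measurable (Y n)) (h : iIndepFun Y P) :
    IndepFun (Y 0) (fun ω n => Y (n + 1) ω) P := by
  have hind := indep_iSup_of_disjoint (fun n => (hY n).comap_le)
    ((iIndepFun_iff_iIndep _ _ _).1 h) (S := {0}) (T := Set.Ioi 0) (by simp)
  rw [IndepFun_iff_Indep]
  refine indep_of_indep_of_le_right (indep_of_indep_of_le_left hind ?_) ?_
  · exact le_iSup₂_of_le 0 rfl le_rfl
  · rw [MeasurableSpace.pi, MeasurableSpace.comap_iSup]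
    refine iSup_le fun n => ?_
    rw [MeasurableSpace.comap_comp]
    exact le_iSup₂_of_le (n + 1) n.succ_pos le_rfl

lemma IndepFun.integral_add_pow {X Y : Ω → ℝ} (hXY : IndepFun X Y P)
    (hX : ∀ j, Integrable (fun ω => X ω ^ j) P) (hY : ∀ j, Integrable (fun ω => Y ω ^ j) P)
    (k : ℕ) :
    ∫ ω, (X ω + Y ω) ^ k ∂P =
      ∑ j ∈ range (k + 1), (∫ ω, X ω ^ j ∂P) * (∫ ω, Y ω ^ (k - j) ∂P) * k.choose j := by
  have hpow (j i : ℕ) : IndepFun (fun ω => X ω ^ j) (fun ω => Y ω ^ i) P :=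
    hXY.comp (measurable_id.pow_const j) (measurable_id.pow_const i)
  have hterm (j : ℕ) : Integrable (fun ω => X ω ^ j * Y ω ^ (k - j) * k.choose j) P :=
    ((hpow j _).integrable_mul (hX j) (hY _)).mul_const _
  simp_rw [add_pow]
  rw [integral_finsetSum _ fun j _ => hterm j]
  refine sum_congr rfl fun j _ => ?_
  rw [integral_mul_const, (hpow j _).integral_fun_mul_eq_mul_integral (hX j).1 (hY _).1]

end ProbabilityTheory

section MomentRecursion

variable {Ω : Type*} [MeasurableSpace Ω] {P : Measure Ω} [IsProbabilityMeasure P]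

theorem integral_geomWeightedSum_pow {Y : ℕ → Ω → ℝ} {a C : ℝ} (hmeas : ∀ n, Measurable (Y n))
    (hindep : iIndepFun Y P) (hident : ∀ n, IdentDistrib (Y n) (Y 0) P P)
    (hbound : ∀ n, ∀ᵐ ω ∂P, |Y n ω| ≤ C) (ha : |a| < 1) (k : ℕ) :
    ∫ ω, geomWeightedSum a (Y · ω) ^ k ∂P =
      a ^ k * ∑ j ∈ range (k + 1),
        (∫ ω, geomWeightedSum a (Y · ω) ^ j ∂P) * (∫ ω, Y 0 ω ^ (k - j) ∂P) * k.choose j := by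
  set T := fun ω => geomWeightedSum a (Y · ω)
  set T' := fun ω => geomWeightedSum a (fun n => Y (n + 1) ω)
  have hbd : ∀ᵐ ω ∂P, ∀ n, |Y n ω| ≤ C := ae_all_iff.2 hbound
  have hsplit : ∀ᵐ ω ∂P, T ω = a * (T' ω + Y 0 ω) :=
    hbd.mono fun ω hω => geomWeightedSum_eq_mul_add ha hω
  have hlaw : IdentDistrib T' T P P :=
    (IdentDistrib.pi (fun n => (hident (n + 1)).trans (hident n).symm)
      (hindep.precomp (add_left_injective 1)) hindep).comp (measurable_geomWeightedSum a)
  have hindT' : IndepFun T' (Y 0) P :=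
    ((hindep.indepFun_head_tail hmeas).comp measurable_id (measurable_geomWeightedSum a)).symm
  have hT'int (j : ℕ) : Integrable (fun ω => T' ω ^ j) P :=
    integrable_pow_of_ae_abs_le
      ((measurable_geomWeightedSum a).comp
        (measurable_pi_lambda _ fun n => hmeas (n + 1))).aestronglyMeasurable
      (hbd.mono fun ω hω => abs_geomWeightedSum_le ha fun n => hω (n + 1)) j
  have hY0int (j : ℕ) : Integrable (fun ω => Y 0 ω ^ j) P :=
    integrable_pow_of_ae_abs_le (hmeas 0).aestronglyMeasurable (hbound 0) j
  have hmom (j : ℕ) : ∫ ω, T' ω ^ j ∂P = ∫ ω, T ω ^ j ∂P :=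
    (hlaw.comp (measurable_id.pow_const j)).integral_eq
  calc ∫ ω, T ω ^ k ∂P = ∫ ω, a ^ k * (T' ω + Y 0 ω) ^ k ∂P :=
        integral_congr_ae (hsplit.mono fun ω hω => by simp only [hω, mul_pow])
    _ = _ := by
        rw [integral_const_mul, hindT'.integral_add_pow hT'int hY0int]
        simp_rw [hmom]
        rfl

end MomentRecursion

section Rademacher

variable {Ω : Type*} [MeasurableSpace Ω] {P : Measure Ω} [IsProbabilityMeasure P] {X : Ω → ℝ}

lemma ae_eq_one_or_eq_neg_one (hX : Measurable X) (h1 : P {ω | X ω = 1} = 1 / 2)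
    (h2 : P {ω | X ω = -1} = 1 / 2) : ∀ᵐ ω ∂P, X ω = 1 ∨ X ω = -1 := by
  have hdisj : Disjoint {ω | X ω = 1} {ω | X ω = -1} :=
    Set.disjoint_left.2 fun ω (h : X ω = 1) (h' : X ω = -1) => by norm_num [h] at h'
  have hmeas : MeasurableSet {ω | X ω = 1 ∨ X ω = -1} :=
    (hX (measurableSet_singleton 1)).union (hX (measurableSet_singleton (-1)))
  rw [ae_iff_measure_eq hmeas.nullMeasurableSet, Set.ofPred_or,
    measure_union hdisj (hX (measurableSet_singleton (-1))), h1, h2, ENNReal.add_halves,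
    measure_univ]

lemma map_eq_of_measure_eq_half (hX : Measurable X) (h1 : P {ω | X ω = 1} = 1 / 2)
    (h2 : P {ω | X ω = -1} = 1 / 2) :
    P.map X = (1 / 2 : ENNReal) • Measure.dirac 1 + (1 / 2 : ENNReal) • Measure.dirac (-1) := by
  rw [(Measure.ae_eq_or_eq_iff_map_eq_dirac_add_dirac hX.aemeasurable (by norm_num)).1
    (ae_eq_one_or_eq_neg_one hX h1 h2)]
  exact congr_arg₂ _ (congr_arg₂ _ h1 rfl) (congr_arg₂ _ h2 rfl)

lemma integral_pow_of_measure_eq_half (hX : Measurable X) (h1 : P {ω | X ω = 1} = 1 / 2)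
    (h2 : P {ω | X ω = -1} = 1 / 2) (j : ℕ) :
    ∫ ω, X ω ^ j ∂P = if Even j then 1 else 0 := by
  rw [← integral_map (f := fun y : ℝ => y ^ j) hX.aemeasurable (by fun_prop),
    map_eq_of_measure_eq_half hX h1 h2,
    integral_add_measure ((integrable_dirac (by simp)).smul_measure (by simp))
      ((integrable_dirac (by simp)).smul_measure (by simp))]
  rcases j.even_or_odd with hj | hj <;> norm_num [hj, hj.neg_one_pow, Nat.not_even_iff_odd]

end Rademacher

section BinomialRecursion

lemma sum_range_two_mul_ite_even {M : Type*} [AddCommMonoid M] (f : ℕ → M) (n : ℕ) :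
    ∑ j ∈ range (2 * n), (if Even j then f j else 0) = ∑ i ∈ range n, f (2 * i) := by
  induction n with
  | zero => simp
  | succ n ih =>
    rw [Nat.mul_succ, sum_range_succ, sum_range_succ, ih, sum_range_succ]
    simp

def IsEvenBinomialRec (L : ℝ) (u : ℕ → ℝ) : Prop :=
  ∀ k, u k = L⁻¹ ^ k * ∑ j ∈ range (k + 1), u j * (if Even (k - j) then 1 else 0) * k.choose j

variable {L : ℝ} {u : ℕ → ℝ}

lemma sub_one_mul_eq_sum_of_rec (hL : L ≠ 0)
    (h : IsEvenBinomialRec L u) (k : ℕ) :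
    (L ^ k - 1) * u k =
      ∑ j ∈ range k, u j * (if Even (k - j) then 1 else 0) * k.choose j := by
  have hk := h k
  rw [sum_range_succ, Nat.sub_self, Nat.choose_self, if_pos Even.zero, inv_pow,
    eq_inv_mul_iff_mul_eq₀ (pow_ne_zero k hL)] at hk
  push_cast at hk
  linear_combination hk

lemma eq_zero_of_odd_of_rec (hL : 1 < L)
    (h : IsEvenBinomialRec L u) {k : ℕ}
    (hk : Odd k) : u k = 0 := by
  induction k using Nat.strong_induction_on with
  | _ k ih =>
    have hsum : ∑ j ∈ range k, u j * (if Even (k - j) then 1 else 0) * k.choose j = 0 := by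
      refine sum_eq_zero fun j hj => ?_
      have hjk := mem_range.1 hj
      by_cases hkj : Even (k - j)
      · have hj_odd : Odd j := by
          rw [← Nat.not_even_iff_odd, ← (Nat.even_sub hjk.le).1 hkj]
          exact Nat.not_even_iff_odd.2 hk
        rw [ih j hjk hj_odd, zero_mul, zero_mul]
      · rw [if_neg hkj, mul_zero, zero_mul]
    have hrec := sub_one_mul_eq_sum_of_rec (zero_lt_one.trans hL).ne' h k
    rw [hsum] at hrec
    exact (mul_eq_zero.1 hrec).resolve_left (sub_ne_zero.2 (one_lt_pow₀ hL hk.pos.ne').ne')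

lemma eq_inv_mul_sum_of_rec (hL : 1 < L)
    (h : IsEvenBinomialRec L u) {n : ℕ}
    (hn : 1 ≤ n) :
    u (2 * n) = (L ^ (2 * n) - 1)⁻¹ * ∑ j ∈ range n, ((2 * n).choose (2 * j) : ℝ) * u (2 * j) := by
  rw [eq_inv_mul_iff_mul_eq₀ (sub_ne_zero.2 (one_lt_pow₀ hL (by omega)).ne'),
    sub_one_mul_eq_sum_of_rec (zero_lt_one.trans hL).ne' h,
    ← sum_range_two_mul_ite_even fun j => ((2 * n).choose j : ℝ) * u j]
  refine sum_congr rfl fun j hj => ?_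
  by_cases hj' : Even j
  · rw [if_pos ((Nat.even_sub (mem_range.1 hj).le).2 (iff_of_true (even_two_mul n) hj')),
      if_pos hj']
    ring
  · rw [if_neg (by rw [Nat.even_sub (mem_range.1 hj).le]; simp [hj']), if_neg hj']
    ring

end BinomialRecursion

/-- odd moments vanish and the even moments satisfy
`m_(2n)(λ) = (λ^(2n) - 1)⁻¹ ∑_{j=0}^{n-1} C(2n,2j) m_(2j)(λ)`, with `m_0(λ) = 1`. -/
theorem stmt_4 {Ω : Type*} [MeasurableSpace Ω] (P : Measure Ω) [IsProbabilityMeasure P]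
    (X : ℕ → Ω → ℝ) (hmeas : ∀ n, Measurable (X n))
    (hindep : iIndepFun X P)
    (h1 : ∀ n, P {ω | X n ω = 1} = 1 / 2) (h2 : ∀ n, P {ω | X n ω = -1} = 1 / 2)
    (S : ℝ → Ω → ℝ)
    (hS : ∀ l : ℝ, 1 < l → ∀ ω, S l ω = ∑' n : ℕ, l ^ (-(n + 1 : ℤ)) * X n ω)
    (m : ℝ → ℕ → ℝ) (hm : ∀ l k, m l k = ∫ ω, (S l ω) ^ k ∂P)
    (l : ℝ) (hl : 1 < l) (n : ℕ) (hn : 1 ≤ n) :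
    m l 0 = 1 ∧ m l (2 * n - 1) = 0 ∧
      m l (2 * n) = (l ^ (2 * n) - 1)⁻¹ *
        ∑ j ∈ Finset.range n, ((2 * n).choose (2 * j) : ℝ) * m l (2 * j) := by
  have ha : |l⁻¹| < 1 := by
    rw [abs_inv, abs_of_pos (zero_lt_one.trans hl)]
    exact inv_lt_one_of_one_lt₀ hl
  have hmS (k : ℕ) : m l k = ∫ ω, geomWeightedSum l⁻¹ (X · ω) ^ k ∂P := by
    simp_rw [hm, hS l hl, geomWeightedSum, zpow_neg, ← inv_zpow]
    norm_cast
  have hident (i : ℕ) : IdentDistrib (X i) (X 0) P P :=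
    ⟨(hmeas i).aemeasurable, (hmeas 0).aemeasurable, by
      rw [map_eq_of_measure_eq_half (hmeas i) (h1 i) (h2 i),
        map_eq_of_measure_eq_half (hmeas 0) (h1 0) (h2 0)]⟩
  have hbound (i : ℕ) : ∀ᵐ ω ∂P, |X i ω| ≤ 1 :=
    (ae_eq_one_or_eq_neg_one (hmeas i) (h1 i) (h2 i)).mono fun ω h => by
      rcases h with h | h <;> simp [h]
  have hrec : IsEvenBinomialRec l (m l) := fun k => by
    simp_rw [hmS, integral_geomWeightedSum_pow hmeas hindep hident hbound ha k,
      integral_pow_of_measure_eq_half (hmeas 0) (h1 0) (h2 0)]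
  exact ⟨by simp [hm], eq_zero_of_odd_of_rec hl hrec ⟨n - 1, by omega⟩,
    eq_inv_mul_sum_of_rec hl hrec hn⟩
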